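/- Let φ be a subharmonic function on ℂ with Δφ a doubling measure, fix ζ ∈ ℂ, and for 0 < ε < 1 set φ_ε(w) = (|w−ζ|/ρ(ζ))^ε and Φ_ε(w) = (|B_{ρ(ζ)}|^{−1} χ_{B(0,ρ(ζ))} ∗ |∂φ_ε/∂w|²)(w), i.e. the average of |∂φ_ε/∂w|²(u) = (ε²/4) |u−ζ|^{2ε−2} ρ(ζ)^{−2ε} over the disk of radius ρ(ζ) centered at w. Then for every C > 0 there exists 0 < ε₀ < 1, depending only on C and the doubling constant of Δφ, such that Φ_ε(w) ≤ C ρ(w)^{−2} for all w ∈ ℂ whenever 0 < ε ≤ ε₀. -/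

import Mathlib

open MeasureTheory Metric Complex Filter

noncomputable section

/-- Pointwise Laplacian of a function on `ℂ ≃ ℝ²`. -/
def lap (f : ℂ → ℝ) (z : ℂ) : ℝ :=
  iteratedFDeriv ℝ 2 f z ![1, 1] + iteratedFDeriv ℝ 2 f z ![Complex.I, Complex.I]

/-- `φ` is subharmonic on `ℂ`: upper semicontinuous, locally integrable, and satisfies
the sub-mean value inequality on disks. -/
def Subharmonic (φ : ℂ → ℝ) : Prop :=
  UpperSemicontinuous φ ∧ LocallyIntegrable φ volume ∧
    ∀ z : ℂ, ∀ r : ℝ, 0 < r → φ z ≤ ⨍ w in ball z r, φ w ∂volume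

/-- `μ` is the distributional Laplacian of `φ`. -/
def IsLaplacianOf (μ : Measure ℂ) (φ : ℂ → ℝ) : Prop :=
  ∀ ψ : ℂ → ℝ, ContDiff ℝ (⊤ : ℕ∞) ψ → HasCompactSupport ψ →
    ∫ z : ℂ, lap ψ z * φ z = ∫ z : ℂ, ψ z ∂μ

/-- `μ` is doubling with doubling constant (at most) `Cd`. -/
def DoublingWith (μ : Measure ℂ) (Cd : ℝ) : Prop :=
  ∀ z : ℂ, ∀ r : ℝ, 0 < r → μ (ball z (2 * r)) ≤ ENNReal.ofReal Cd * μ (ball z r)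

/-- `ρ z` is the positive radius such that `μ (D(z, ρ z)) = 1`. -/
def IsRadiusFn (μ : Measure ℂ) (ρ : ℂ → ℝ) : Prop :=
  ∀ z : ℂ, 0 < ρ z ∧ μ (ball z (ρ z)) = 1

/-!
Reverse doubling (`ball x (2 * r)` contains `ball x r` together with a disjoint ball of comparable
measure) makes `μ (ball ζ (2 ^ n * ρ ζ))` grow at least like `(1 + Cd⁻³) ^ n`, while doubling caps
`μ (ball w (2 ^ m * ρ w))` by `Cd ^ m`. Comparing nested balls of measure `1` around `ζ` and `w`
gives the sublinear growth `ρ w ≤ 6 ρ(ζ) T ^ (1 - θ)` with `T = 1 + |w - ζ| / ρ(ζ)` and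
`θ = log_Cd (1 + Cd⁻³) > 0`. Integrating in polar coordinates (near `ζ`) or bounding the integrand
pointwise (far from `ζ`), the average `Φ_ε(w)` is at most `(9 ε / 4) T ^ (2ε - 2) / ρ(ζ)²`,
so `Φ_ε(w) ρ(w)² ≤ 81 ε T ^ (2ε - 2θ) ≤ 81 ε` as soon as `ε ≤ θ`.
-/

open Set Module Real

section RadialIntegral

variable {E : Type*} [NormedAddCommGroup E] [NormedSpace ℝ E] [FiniteDimensional ℝ E]
  [MeasurableSpace E] [BorelSpace E] [Nontrivial E] (μ : Measure E) [μ.IsAddHaarMeasure]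

theorem integral_ball_norm_rpow {s : ℝ} (hs : 0 < s) {R : ℝ} (hR : 0 ≤ R) :
    ∫ x in ball (0 : E) R, ‖x‖ ^ (s - finrank ℝ E) ∂μ
      = finrank ℝ E * μ.real (ball 0 1) * (R ^ s / s) := by
  have hd : 1 ≤ finrank ℝ E := finrank_pos
  have hradial : ∫ x in ball (0 : E) R, ‖x‖ ^ (s - finrank ℝ E) ∂μ
      = ∫ x, (Iio R).indicator (fun y : ℝ => y ^ (s - finrank ℝ E)) ‖x‖ ∂μ := by
    rw [← integral_indicator measurableSet_ball]
    congr 1 with x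
    rw [show ball (0 : E) R = (‖·‖) ⁻¹' Iio R by ext; simp, ← indicator_comp_right]
    rfl
  have hpow : ∀ y ∈ Ioo 0 R, y ^ (finrank ℝ E - 1) * y ^ (s - finrank ℝ E) = y ^ (s - 1) := by
    intro y hy
    rw [← rpow_natCast, ← rpow_add hy.1, Nat.cast_sub hd]
    ring_nf
  have hindicator : ∀ y : ℝ,
      y ^ (finrank ℝ E - 1) • (Iio R).indicator (fun y : ℝ => y ^ (s - finrank ℝ E)) y
        = (Iio R).indicator (fun y : ℝ => y ^ (finrank ℝ E - 1) * y ^ (s - finrank ℝ E)) y :=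
    fun y => (indicator_mul_right (Iio R) (fun y : ℝ => y ^ (finrank ℝ E - 1)) _).symm
  rw [hradial, integral_fun_norm_addHaar, nsmul_eq_mul, smul_eq_mul, mul_assoc]
  simp_rw [hindicator]
  rw [integral_indicator measurableSet_Iio, Measure.restrict_restrict measurableSet_Iio,
    Iio_inter_Ioi, setIntegral_congr_fun measurableSet_Ioo hpow, ← integral_Ioc_eq_integral_Ioo,
    ← intervalIntegral.integral_of_le hR, integral_rpow (by left; linarith)]
  simp [zero_rpow hs.ne']

end RadialIntegral

theorem Complex.volume_real_ball (a : ℂ) {r : ℝ} (hr : 0 ≤ r) :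
    volume.real (ball a r) = π * r ^ 2 := by
  rw [measureReal_def, Complex.volume_ball, ENNReal.toReal_mul, ENNReal.toReal_pow,
    ENNReal.toReal_ofReal hr, ENNReal.coe_toReal, NNReal.coe_real_pi, mul_comm]

theorem Complex.integral_ball_zero_norm_rpow {ε : ℝ} (hε : 0 < ε) {R : ℝ} (hR : 0 ≤ R) :
    ∫ x in ball (0 : ℂ) R, ‖x‖ ^ (2 * ε - 2) = π * R ^ (2 * ε) / ε := by
  have h := integral_ball_norm_rpow (volume : Measure ℂ) (mul_pos two_pos hε) hR
  rw [Complex.finrank_real_complex, Complex.volume_real_ball 0 zero_le_one, Nat.cast_ofNat] at h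
  rw [h]
  field_simp

theorem Complex.integrableOn_ball_zero_norm_rpow {ε : ℝ} (hε : 0 < ε) (R : ℝ) :
    IntegrableOn (fun x : ℂ => ‖x‖ ^ (2 * ε - 2)) (ball 0 R) := by
  refine integrableOn_ball_of_norm_le_rpow (C := 1) (α := 2 - 2 * ε)
    (by rw [Complex.finrank_real_complex]; norm_num)
    (by rw [Complex.finrank_real_complex]; push_cast; linarith)
    (ae_of_all _ fun x => ?_) (measurable_norm.pow_const _).aestronglyMeasurable
  rw [norm_of_nonneg (by positivity), one_mul, neg_sub]

theorem Complex.integral_ball_norm_rpow_le {ε : ℝ} (hε : 0 < ε) (hε1 : ε ≤ 1) {R : ℝ} (hR : 0 < R)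
    (v : ℂ) :
    ∫ x in ball v R, ‖x‖ ^ (2 * ε - 2) ≤ 9 * π / ε * R ^ (2 * ε) * (1 + ‖v‖ / R) ^ (2 * ε - 2) := by
  set T := 1 + ‖v‖ / R
  have hTR : T * R = R + ‖v‖ := by simp only [T, add_mul, one_mul, div_mul_cancel₀ _ hR.ne']
  have hp : 2 * ε - 2 ≤ 0 := by linarith
  have h3pow : (3 : ℝ) ^ (2 - 2 * ε) ≤ 9 := by
    calc (3 : ℝ) ^ (2 - 2 * ε) ≤ 3 ^ (2 : ℝ) :=
          rpow_le_rpow_of_exponent_le (by norm_num) (by linarith)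
      _ = 9 := by norm_num
  rcases le_or_gt ‖v‖ (2 * R) with hnear | hfar
  · have hsub : ball v R ⊆ ball 0 (3 * R) := ball_subset_ball' (by rw [dist_zero_right]; linarith)
    have hT : T ≤ 3 := by
      have : ‖v‖ / R ≤ 2 := (div_le_iff₀ hR).2 hnear
      linarith
    calc ∫ x in ball v R, ‖x‖ ^ (2 * ε - 2)
        ≤ ∫ x in ball 0 (3 * R), ‖x‖ ^ (2 * ε - 2) :=
          setIntegral_mono_set (Complex.integrableOn_ball_zero_norm_rpow hε _)
            (ae_of_all _ fun x => by positivity) hsub.eventuallyLE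
      _ = π / ε * (3 ^ (2 * ε - 2) * 9) * R ^ (2 * ε) := by
          rw [Complex.integral_ball_zero_norm_rpow hε (by positivity), mul_rpow (by norm_num) hR.le,
            rpow_sub (by norm_num), rpow_two]
          ring
      _ ≤ π / ε * (T ^ (2 * ε - 2) * 9) * R ^ (2 * ε) := by
          gcongr π / ε * (?_ * 9) * _
          exact rpow_le_rpow_of_nonpos (by positivity) hT hp
      _ = 9 * π / ε * R ^ (2 * ε) * T ^ (2 * ε - 2) := by ring
  · have hlower : ∀ x ∈ ball v R, T * R / 3 ≤ ‖x‖ := by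
      intro x hx
      have := norm_sub_norm_le v x
      rw [mem_ball, dist_eq_norm, norm_sub_rev] at hx
      linarith
    have hbound : ∀ x ∈ ball v R, ‖‖x‖ ^ (2 * ε - 2)‖ ≤ 9 * (T * R) ^ (2 * ε - 2) := by
      intro x hx
      rw [norm_of_nonneg (by positivity)]
      calc ‖x‖ ^ (2 * ε - 2) ≤ (T * R / 3) ^ (2 * ε - 2) :=
            rpow_le_rpow_of_nonpos (by positivity) (hlower x hx) hp
        _ = 3 ^ (2 - 2 * ε) * (T * R) ^ (2 * ε - 2) := by
            rw [div_rpow (by positivity) (by norm_num), div_eq_mul_inv, ← rpow_neg (by norm_num)]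
            ring_nf
        _ ≤ 9 * (T * R) ^ (2 * ε - 2) := by gcongr
    calc ∫ x in ball v R, ‖x‖ ^ (2 * ε - 2)
        ≤ 9 * (T * R) ^ (2 * ε - 2) * volume.real (ball v R) :=
          (le_abs_self _).trans (norm_setIntegral_le_of_norm_le_const measure_ball_lt_top hbound)
      _ = 9 * π * R ^ (2 * ε) * T ^ (2 * ε - 2) := by
          rw [Complex.volume_real_ball v hR.le, mul_rpow (by positivity) hR.le, rpow_sub hR,
            rpow_two]
          field_simp
      _ ≤ 9 * π / ε * R ^ (2 * ε) * T ^ (2 * ε - 2) := by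
          gcongr
          exact le_div_self (by positivity) hε hε1

theorem Complex.setIntegral_ball_comp_sub (f : ℂ → ℝ) (w ζ : ℂ) (R : ℝ) :
    ∫ u in ball w R, f (u - ζ) = ∫ x in ball (w - ζ) R, f x := by
  have hpre : (· - ζ) ⁻¹' ball (w - ζ) R = ball w R := by
    ext u
    simp [dist_eq_norm]
  rw [← hpre, (measurePreserving_sub_right volume ζ).setIntegral_preimage_emb
    (measurableEmbedding_subRight ζ)]

theorem average_gradient_le_rpow {ε : ℝ} (hε : 0 < ε) (hε1 : ε ≤ 1) {R : ℝ} (hR : 0 < R) (w ζ : ℂ) :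
    (π * R ^ 2)⁻¹ * ∫ u in ball w R, ε ^ 2 / 4 * ‖u - ζ‖ ^ (2 * ε - 2) * R ^ (-(2 * ε))
      ≤ 9 * ε / 4 * (1 + ‖w - ζ‖ / R) ^ (2 * ε - 2) / R ^ 2 := by
  have hconst : ∀ u : ℂ, ε ^ 2 / 4 * ‖u - ζ‖ ^ (2 * ε - 2) * R ^ (-(2 * ε))
      = ε ^ 2 / 4 * R ^ (-(2 * ε)) * ‖u - ζ‖ ^ (2 * ε - 2) := fun u => by ring
  simp_rw [hconst]
  rw [integral_const_mul, Complex.setIntegral_ball_comp_sub (fun x => ‖x‖ ^ (2 * ε - 2))]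
  calc (π * R ^ 2)⁻¹ * (ε ^ 2 / 4 * R ^ (-(2 * ε)) * ∫ x in ball (w - ζ) R, ‖x‖ ^ (2 * ε - 2))
      ≤ (π * R ^ 2)⁻¹ * (ε ^ 2 / 4 * R ^ (-(2 * ε)) *
          (9 * π / ε * R ^ (2 * ε) * (1 + ‖w - ζ‖ / R) ^ (2 * ε - 2))) := by
        gcongr
        exact Complex.integral_ball_norm_rpow_le hε hε1 hR _
    _ = 9 * ε / 4 * (1 + ‖w - ζ‖ / R) ^ (2 * ε - 2) / R ^ 2 := by
        rw [rpow_neg hR.le]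
        field_simp

namespace DoublingWith

variable {μ : Measure ℂ} {Cd : ℝ}

theorem measure_ball_two_pow_mul_le (hD : DoublingWith μ Cd) (x : ℂ) {r : ℝ} (hr : 0 < r)
    (m : ℕ) : μ (ball x (2 ^ m * r)) ≤ ENNReal.ofReal Cd ^ m * μ (ball x r) := by
  induction m with
  | zero => simp
  | succ k ih =>
    calc μ (ball x (2 ^ (k + 1) * r)) = μ (ball x (2 * (2 ^ k * r))) := by ring_nf
      _ ≤ ENNReal.ofReal Cd * μ (ball x (2 ^ k * r)) := hD x _ (by positivity)
      _ ≤ ENNReal.ofReal Cd * (ENNReal.ofReal Cd ^ k * μ (ball x r)) := by gcongr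
      _ = ENNReal.ofReal Cd ^ (k + 1) * μ (ball x r) := by ring

/-- Reverse doubling: `ball x (2 * r)` also contains `ball y (r / 2)`, `dist x y = 3 r / 2`, which
is disjoint from `ball x r` and covers it after three doublings. -/
theorem mul_measure_ball_le_measure_ball_two_mul (hD : DoublingWith μ Cd) (x : ℂ) {r : ℝ}
    (hr : 0 < r) :
    (1 + (ENNReal.ofReal Cd ^ 3)⁻¹) * μ (ball x r) ≤ μ (ball x (2 * r)) := by
  set y := x + ((3 * r / 2 : ℝ) : ℂ)
  have hxy : dist x y = 3 * r / 2 := by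
    simp [y, dist_eq_norm, Complex.norm_real, abs_of_pos hr]
  have hfar : μ (ball x r) / ENNReal.ofReal Cd ^ 3 ≤ μ (ball y (r / 2)) := by
    refine ENNReal.div_le_of_le_mul' ?_
    calc μ (ball x r) ≤ μ (ball y (2 ^ 3 * (r / 2))) :=
          measure_mono (ball_subset_ball' (by rw [hxy]; linarith))
      _ ≤ ENNReal.ofReal Cd ^ 3 * μ (ball y (r / 2)) :=
          hD.measure_ball_two_pow_mul_le y (by positivity) 3
  have hdisj : Disjoint (ball x r) (ball y (r / 2)) :=
    ball_disjoint_ball (by rw [hxy]; linarith)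
  calc (1 + (ENNReal.ofReal Cd ^ 3)⁻¹) * μ (ball x r)
      = μ (ball x r) + μ (ball x r) / ENNReal.ofReal Cd ^ 3 := by rw [div_eq_mul_inv]; ring
    _ ≤ μ (ball x r) + μ (ball y (r / 2)) := by gcongr
    _ = μ (ball x r ∪ ball y (r / 2)) := (measure_union hdisj measurableSet_ball).symm
    _ ≤ μ (ball x (2 * r)) := measure_mono (union_subset (ball_subset_ball (by linarith))
          (ball_subset_ball' (by rw [dist_comm, hxy]; linarith)))

theorem pow_mul_measure_ball_le (hD : DoublingWith μ Cd) (x : ℂ) {r : ℝ} (hr : 0 < r) (n : ℕ) :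
    (1 + (ENNReal.ofReal Cd ^ 3)⁻¹) ^ n * μ (ball x r) ≤ μ (ball x (2 ^ n * r)) := by
  induction n with
  | zero => simp
  | succ k ih =>
    calc _ ≤ (1 + (ENNReal.ofReal Cd ^ 3)⁻¹) * μ (ball x (2 ^ k * r)) := by
          rw [pow_succ', mul_assoc]; gcongr
      _ ≤ μ (ball x (2 * (2 ^ k * r))) :=
          hD.mul_measure_ball_le_measure_ball_two_mul x (by positivity)
      _ = μ (ball x (2 ^ (k + 1) * r)) := by ring_nf

theorem pow_mul_measure_ball_le_pow_mul (hD : DoublingWith μ Cd) {x y : ℂ} {r s : ℝ}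
    (hr : 0 < r) (hs : 0 < s) {n m : ℕ} (h : ball x (2 ^ n * r) ⊆ ball y (2 ^ m * s)) :
    (1 + (ENNReal.ofReal Cd ^ 3)⁻¹) ^ n * μ (ball x r) ≤ ENNReal.ofReal Cd ^ m * μ (ball y s) :=
  (hD.pow_mul_measure_ball_le x hr n).trans <|
    (measure_mono h).trans (hD.measure_ball_two_pow_mul_le y hs m)

end DoublingWith

/-- The growth exponent `θ` of `ρ`: `Cd ^ θ = 1 + Cd⁻³` is the reverse doubling constant. -/
def doublingExponent (Cd : ℝ) : ℝ := logb Cd (1 + (Cd ^ 3)⁻¹)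

theorem doublingExponent_pos {Cd : ℝ} (hCd : 1 < Cd) : 0 < doublingExponent Cd :=
  logb_pos hCd (lt_add_of_pos_right 1 (by positivity))

namespace IsRadiusFn

variable {μ : Measure ℂ} {Cd : ℝ} {ρ : ℂ → ℝ}

theorem one_add_inv_pow_le_pow (hρ : IsRadiusFn μ ρ) (hD : DoublingWith μ Cd) {w ζ : ℂ} {n m : ℕ}
    (h : ‖w - ζ‖ + 2 ^ n * ρ ζ ≤ 2 ^ m * ρ w) :
    (1 + (ENNReal.ofReal Cd ^ 3)⁻¹) ^ n ≤ ENNReal.ofReal Cd ^ m := by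
  have hsub : ball ζ (2 ^ n * ρ ζ) ⊆ ball w (2 ^ m * ρ w) :=
    ball_subset_ball' (by rw [dist_eq_norm, norm_sub_rev]; linarith)
  simpa [(hρ ζ).2, (hρ w).2] using
    hD.pow_mul_measure_ball_le_pow_mul (hρ ζ).1 (hρ w).1 hsub

theorem one_lt_doublingConst (hρ : IsRadiusFn μ ρ) (hD : DoublingWith μ Cd) : 1 < Cd := by
  have h := hρ.one_add_inv_pow_le_pow hD (w := 0) (ζ := 0) (n := 1) (m := 1) (by simp)
  rw [pow_one, pow_one] at h
  refine ENNReal.one_lt_ofReal.1 (lt_of_lt_of_le ?_ h)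
  exact ENNReal.lt_add_right ENNReal.one_ne_top
    (ENNReal.inv_ne_zero.2 (ENNReal.pow_ne_top ENNReal.ofReal_ne_top))

theorem mul_doublingExponent_le (hρ : IsRadiusFn μ ρ) (hD : DoublingWith μ Cd) {w ζ : ℂ}
    {n m : ℕ} (h : ‖w - ζ‖ + 2 ^ n * ρ ζ ≤ 2 ^ m * ρ w) : n * doublingExponent Cd ≤ m := by
  have hCd := hρ.one_lt_doublingConst hD
  have h := hρ.one_add_inv_pow_le_pow hD h
  rw [← ENNReal.ofReal_pow (by positivity), ← ENNReal.ofReal_inv_of_pos (by positivity),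
    ← ENNReal.ofReal_one, ← ENNReal.ofReal_add zero_le_one (by positivity),
    ← ENNReal.ofReal_pow (by positivity), ← ENNReal.ofReal_pow (by positivity),
    ENNReal.ofReal_le_ofReal_iff (by positivity)] at h
  have := logb_le_logb_of_le hCd (by positivity) h
  rwa [logb_pow, logb_pow, logb_self_eq_one hCd, mul_one] at this

theorem lt_norm_sub_add_two_mul (hρ : IsRadiusFn μ ρ) (hD : DoublingWith μ Cd) (w ζ : ℂ) :
    ρ w < ‖w - ζ‖ + 2 * ρ ζ := by
  by_contra! h
  have h1 := hρ.mul_doublingExponent_le hD (n := 1) (m := 0) (by simpa using h)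
  rw [Nat.cast_one, one_mul, Nat.cast_zero] at h1
  exact (doublingExponent_pos (hρ.one_lt_doublingConst hD)).not_ge h1

theorem le_mul_rpow (hρ : IsRadiusFn μ ρ) (hD : DoublingWith μ Cd) (w ζ : ℂ) :
    ρ w ≤ 6 * ρ ζ * (1 + ‖w - ζ‖ / ρ ζ) ^ (1 - doublingExponent Cd) := by
  set θ := doublingExponent Cd
  set R := ρ ζ
  set T := 1 + ‖w - ζ‖ / R
  have hR : 0 < R := (hρ ζ).1
  have hw : 0 < ρ w := (hρ w).1
  have hT : 1 ≤ T := le_add_of_nonneg_right (by positivity)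
  have hTR : T * R = R + ‖w - ζ‖ := by simp only [T, add_mul, one_mul, div_mul_cancel₀ _ hR.ne']
  obtain ⟨k, hkT, hTk⟩ := exists_nat_pow_near hT one_lt_two
  have hx : 1 ≤ 3 * (T * R) / ρ w := by
    rw [one_le_div hw]
    have : ρ w < ‖w - ζ‖ + 2 * R := hρ.lt_norm_sub_add_two_mul hD w ζ
    linarith [norm_nonneg (w - ζ)]
  obtain ⟨m, hmx, hxm⟩ := exists_nat_pow_near hx one_lt_two
  have hcontain : ‖w - ζ‖ + 2 ^ (k + 1) * R ≤ 2 ^ (m + 1) * ρ w := by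
    rw [div_lt_iff₀ hw] at hxm
    have : (2 : ℝ) ^ (k + 1) * R ≤ 2 * (T * R) := by rw [pow_succ, mul_comm _ 2, mul_assoc]; gcongr
    linarith
  have hθ : T ^ θ ≤ 2 ^ (m + 1) := by
    have hexp := hρ.mul_doublingExponent_le hD hcontain
    calc T ^ θ ≤ ((2 : ℝ) ^ (k + 1)) ^ θ :=
          rpow_le_rpow (by positivity) hTk.le (doublingExponent_pos (hρ.one_lt_doublingConst hD)).le
      _ = 2 ^ (((k + 1 : ℕ) : ℝ) * θ) := by rw [← rpow_natCast, ← rpow_mul zero_le_two]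
      _ ≤ 2 ^ ((m + 1 : ℕ) : ℝ) := rpow_le_rpow_of_exponent_le one_le_two hexp
      _ = 2 ^ (m + 1) := rpow_natCast _ _
  have hTθ : 0 < T ^ θ := by positivity
  rw [le_div_iff₀ hw] at hmx
  calc ρ w ≤ 6 * (T * R) / T ^ θ := by
        rw [le_div_iff₀ hTθ]
        calc ρ w * T ^ θ ≤ ρ w * 2 ^ (m + 1) := by gcongr
          _ = 2 * (2 ^ m * ρ w) := by ring
          _ ≤ 6 * (T * R) := by linarith
    _ = 6 * R * T ^ (1 - θ) := by rw [rpow_sub (by positivity), rpow_one]; ring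

theorem average_gradient_le (hρ : IsRadiusFn μ ρ) (hD : DoublingWith μ Cd) {ε : ℝ} (hε : 0 < ε)
    (hε1 : ε ≤ 1) (hεθ : ε ≤ doublingExponent Cd) (ζ w : ℂ) :
    (π * ρ ζ ^ 2)⁻¹ * ∫ u in ball w (ρ ζ), ε ^ 2 / 4 * ‖u - ζ‖ ^ (2 * ε - 2) * ρ ζ ^ (-(2 * ε))
      ≤ 81 * ε / ρ w ^ 2 := by
  have hR : 0 < ρ ζ := (hρ ζ).1
  have hw : 0 < ρ w := (hρ w).1
  have hT : 1 ≤ 1 + ‖w - ζ‖ / ρ ζ := le_add_of_nonneg_right (by positivity)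
  have hρw : ρ w ≤ 6 * ρ ζ * (1 + ‖w - ζ‖ / ρ ζ) ^ (1 - ε) :=
    (hρ.le_mul_rpow hD w ζ).trans (by gcongr)
  set S := (1 + ‖w - ζ‖ / ρ ζ) ^ (1 - ε)
  have hS : 0 < S := by positivity
  have hST : (1 + ‖w - ζ‖ / ρ ζ) ^ (2 * ε - 2) = (S ^ 2)⁻¹ := by
    rw [← rpow_natCast, ← rpow_mul (by positivity), ← rpow_neg (by positivity)]
    ring_nf
  calc _ ≤ 9 * ε / 4 * (1 + ‖w - ζ‖ / ρ ζ) ^ (2 * ε - 2) / ρ ζ ^ 2 :=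
        average_gradient_le_rpow hε hε1 hR w ζ
    _ = 81 * ε / (6 * ρ ζ * S) ^ 2 := by rw [hST]; field_simp; ring
    _ ≤ 81 * ε / ρ w ^ 2 := by gcongr

end IsRadiusFn

open Real in
/-- Lemma 13: for every `C > 0` there is `0 < ε₀ < 1`, depending only
on `C` and the doubling constant of `Δφ`, such that for all `0 < ε ≤ ε₀` the average
`Φ_ε(w)` of `|∂φ_ε/∂w|²(u) = (ε²/4)|u-ζ|^{2ε-2} ρ(ζ)^{-2ε}` over the disk
`D(w, ρ(ζ))` satisfies `Φ_ε(w) ≤ C ρ(w)⁻²` for all `w`. -/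
theorem averaged_gradient_bound :
    ∀ Cd C : ℝ, 0 < C → ∃ ε₀ : ℝ, 0 < ε₀ ∧ ε₀ < 1 ∧
      ∀ (φ : ℂ → ℝ) (μ : Measure ℂ) (ρ : ℂ → ℝ),
        Subharmonic φ → IsLaplacianOf μ φ → DoublingWith μ Cd → IsRadiusFn μ ρ →
        ∀ ζ : ℂ, ∀ ε : ℝ, 0 < ε → ε ≤ ε₀ → ∀ w : ℂ,
          (π * ρ ζ ^ 2)⁻¹ *
              ∫ u in ball w (ρ ζ),
                ε ^ 2 / 4 * ‖u - ζ‖ ^ (2 * ε - 2) * ρ ζ ^ (-(2 * ε)) ∂volume ≤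
            C / ρ w ^ 2 := by
  intro Cd C hC
  by_cases hCd : 1 < Cd
  swap
  · exact ⟨1 / 2, by norm_num, by norm_num,
      fun _ _ _ _ _ hD hρ => (hCd (hρ.one_lt_doublingConst hD)).elim⟩
  have hθ := doublingExponent_pos hCd
  refine ⟨min (1 / 2) (min (C / 81) (doublingExponent Cd)), by positivity,
    (min_le_left _ _).trans_lt (by norm_num), ?_⟩
  intro φ μ ρ _ _ hD hρ ζ ε hε hεε₀ w
  simp only [le_min_iff] at hεε₀
  obtain ⟨hε1, hεC, hεθ⟩ := hεε₀
  calc _ ≤ 81 * ε / ρ w ^ 2 := hρ.average_gradient_le hD hε (by linarith) hεθ ζ w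
    _ ≤ C / ρ w ^ 2 := by gcongr; linarith
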